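/- arXiv:0903.3372 — 2 statements merged into one kernel-verified Lean document; each statement's English description precedes it below -/
import Mathlib

section
/- Let S be a nonempty subset of a real inner product space E. The function x ↦ ‖x‖² − d_S(x)² is convex on E. -/
/-!
For each `c`, `‖x‖² - ‖x - c‖² = 2⟪c, x⟫ - ‖c‖²` is affine in `x`, and `‖x‖² - d_S(x)²` is the
supremum of these affine functions over `c ∈ S`; a supremum of convex functions is convex.
-/

open Set Metric

theorem convexOn_of_isLUB_image {𝕜 E β ι : Type*} [Semiring 𝕜] [PartialOrder 𝕜]
    [AddCommMonoid E] [SMul 𝕜 E] [AddCommMonoid β] [PartialOrder β] [IsOrderedAddMonoid β]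
    [Module 𝕜 β] [PosSMulMono 𝕜 β] {s : Set E} {t : Set ι} {f : ι → E → β} {g : E → β}
    (hs : Convex 𝕜 s) (hf : ∀ i ∈ t, ConvexOn 𝕜 s (f i))
    (hg : ∀ x ∈ s, IsLUB ((f · x) '' t) (g x)) : ConvexOn 𝕜 s g := by
  refine ⟨hs, fun x hx y hy a b ha hb hab => ?_⟩
  refine (hg _ (hs hx hy ha hb hab)).2 (forall_mem_image.2 fun i hi => ?_)
  calc f i (a • x + b • y) ≤ a • f i x + b • f i y := (hf i hi).2 hx hy ha hb hab
    _ ≤ a • g x + b • g y := by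
      gcongr
      · exact (hg x hx).1 (mem_image_of_mem _ hi)
      · exact (hg y hy).1 (mem_image_of_mem _ hi)

theorem Metric.isLUB_sub_dist_sq_image {α : Type*} [PseudoMetricSpace α] {S : Set α}
    (hS : S.Nonempty) (r : ℝ) (x : α) :
    IsLUB ((fun c => r - dist x c ^ 2) '' S) (r - infDist x S ^ 2) := by
  have hanti : AntitoneOn (fun d : ℝ => r - d ^ 2) (dist x '' S) := by
    rintro _ ⟨c, -, rfl⟩ _ _ hle
    exact sub_le_sub_left (pow_le_pow_left₀ dist_nonneg hle 2) r
  have hcont : Continuous fun d : ℝ => r - d ^ 2 := by fun_prop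
  simpa only [image_image] using
    (isGLB_infDist hS).isLUB_of_tendsto hanti (hS.image _) hcont.continuousWithinAt

section InnerProductSpace

variable {E : Type*} [NormedAddCommGroup E] [InnerProductSpace ℝ E]

theorem norm_sq_sub_norm_sub_sq (x c : E) :
    ‖x‖ ^ 2 - ‖x - c‖ ^ 2 = 2 * inner ℝ c x - ‖c‖ ^ 2 := by
  rw [norm_sub_sq_real, real_inner_comm]
  ring

theorem convexOn_norm_sq_sub_dist_sq (c : E) :
    ConvexOn ℝ univ fun x : E => ‖x‖ ^ 2 - dist x c ^ 2 := by
  simp_rw [dist_eq_norm, norm_sq_sub_norm_sub_sq]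
  exact (((innerSL ℝ c).toLinearMap.convexOn convex_univ).smul zero_le_two).sub
    (concaveOn_const _ convex_univ)

end InnerProductSpace

/-- For a nonempty subset `S` of a real inner product space `E`, the function
`x ↦ ‖x‖² − d_S(x)²` is convex on `E`. -/
theorem convexOn_norm_sq_sub_infDist_sq {E : Type*} [NormedAddCommGroup E]
    [InnerProductSpace ℝ E] (S : Set E) (hS : S.Nonempty) :
    ConvexOn ℝ Set.univ (fun x : E => ‖x‖ ^ 2 - Metric.infDist x S ^ 2) :=
  convexOn_of_isLUB_image convex_univ (fun c _ => convexOn_norm_sq_sub_dist_sq c)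
    fun x _ => isLUB_sub_dist_sq_image hS _ x
end

section
/- The second Fréchet derivative of the mollified squared distance φ_δ satisfies 0 ≤ D²φ_δ(x)[v, v] ≤ 2‖v‖² for every x, v ∈ ℝ^n. -/
/-!
Both bounds are convexity statements. For convex `C` the function `d_C²` is convex, and for any
`C` the function `‖x‖² - d_C(x)² = sup_{c ∈ C} (2⟪x, c⟫ - ‖c‖²)` is convex. Averaging against the
nonnegative kernel `η_δ` preserves the first property, and also the second one because
`‖x‖² - ‖x - y‖²` is affine in `x` and `η_δ` has mass one. A `C²` convex function has a positive
semidefinite second derivative, and the second derivative of `‖x‖²` is `2 I`.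
-/

open MeasureTheory Metric Set

section Convexity

variable {E : Type*}

theorem ConvexOn.comp_sub_const [AddCommGroup E] [Module ℝ E] {u : E → ℝ}
    (hu : ConvexOn ℝ univ u) (y : E) : ConvexOn ℝ univ fun x => u (x - y) := by
  have := hu.translate_left (-y)
  simp only [Function.comp_def, ← sub_eq_add_neg, preimage_univ] at this
  exact this

theorem convexOn_infDist [NormedAddCommGroup E] [NormedSpace ℝ E] {s : Set E}
    (hs : Convex ℝ s) : ConvexOn ℝ univ (infDist · s) := by
  rcases s.eq_empty_or_nonempty with rfl | hne
  · simpa using convexOn_const (0 : ℝ) (convex_univ : Convex ℝ (univ : Set E))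
  refine ⟨convex_univ, fun x _ y _ a b ha hb hab => le_of_forall_pos_le_add fun ε hε => ?_⟩
  obtain ⟨c, hc, hxc⟩ := (infDist_lt_iff hne).1 (lt_add_of_pos_right (infDist x s) hε)
  obtain ⟨d, hd, hyd⟩ := (infDist_lt_iff hne).1 (lt_add_of_pos_right (infDist y s) hε)
  calc infDist (a • x + b • y) s ≤ dist (a • x + b • y) (a • c + b • d) :=
        infDist_le_dist_of_mem (hs hc hd ha hb hab)
    _ ≤ a * dist x c + b * dist y d := by
        refine (dist_add_add_le _ _ _ _).trans_eq ?_
        rw [dist_smul₀, dist_smul₀, Real.norm_of_nonneg ha, Real.norm_of_nonneg hb]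
    _ ≤ a * (infDist x s + ε) + b * (infDist y s + ε) := by gcongr
    _ = a • infDist x s + b • infDist y s + ε := by
        rw [smul_eq_mul, smul_eq_mul]; linear_combination ε * hab

theorem convexOn_infDist_sq [NormedAddCommGroup E] [NormedSpace ℝ E] {s : Set E}
    (hs : Convex ℝ s) : ConvexOn ℝ univ (infDist · s ^ 2) :=
  (convexOn_infDist hs).pow (fun _ _ => infDist_nonneg) 2

variable [NormedAddCommGroup E] [InnerProductSpace ℝ E]

theorem convexOn_norm_sq_sub_infDist_sq_s10 (s : Set E) :
    ConvexOn ℝ univ fun x => ‖x‖ ^ 2 - infDist x s ^ 2 := by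
  rcases s.eq_empty_or_nonempty with rfl | hne
  · simp only [infDist_empty, ne_eq, OfNat.ofNat_ne_zero, not_false_eq_true, zero_pow, sub_zero]
    exact convexOn_univ_norm.pow (fun x _ => norm_nonneg x) 2
  have affine_le : ∀ x, ∀ c ∈ s, 2 * inner ℝ x c - ‖c‖ ^ 2 ≤ ‖x‖ ^ 2 - infDist x s ^ 2 := by
    intro x c hc
    have := pow_le_pow_left₀ infDist_nonneg (infDist_le_dist_of_mem hc (x := x)) 2
    rw [dist_eq_norm, norm_sub_sq_real] at this
    linarith
  refine ⟨convex_univ, fun x _ y _ a b ha hb hab => ?_⟩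
  set z := a • x + b • y
  set m := ‖z‖ ^ 2 - (a • (‖x‖ ^ 2 - infDist x s ^ 2) + b • (‖y‖ ^ 2 - infDist y s ^ 2))
  have hm : ∀ c ∈ s, m ≤ dist z c ^ 2 := by
    intro c hc
    have hx := affine_le x c hc
    have hy := affine_le y c hc
    rw [dist_eq_norm, norm_sub_sq_real, inner_add_left, real_inner_smul_left,
      real_inner_smul_left]
    simp only [smul_eq_mul, m]
    nlinarith [mul_le_mul_of_nonneg_left hx ha, mul_le_mul_of_nonneg_left hy hb]
  have hsqrt : √m ≤ infDist z s :=
    (le_infDist hne).2 fun c hc => (Real.sqrt_le_left dist_nonneg).2 (hm c hc)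
  have := (Real.sqrt_le_left infDist_nonneg).1 hsqrt
  linarith

theorem ConvexOn.norm_sq_sub_comp_sub_const {u : E → ℝ}
    (hu : ConvexOn ℝ univ fun x => ‖x‖ ^ 2 - u x) (y : E) :
    ConvexOn ℝ univ fun x => ‖x‖ ^ 2 - u (x - y) := by
  have haff : ConvexOn ℝ univ fun x => 2 * inner ℝ y x - ‖y‖ ^ 2 :=
    (((innerₛₗ ℝ y).convexOn convex_univ).smul (c := (2 : ℝ)) (by norm_num)).add_const _
  refine ((hu.comp_sub_const y).add haff).congr fun x _ => ?_
  simp only [Pi.add_apply, norm_sub_sq_real, real_inner_comm y x]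
  ring

end Convexity

section Mollification

theorem convexOn_integral {E α : Type*} [AddCommGroup E] [Module ℝ E] [MeasurableSpace α]
    {μ : Measure α} {s : Set E} {F : E → α → ℝ} (hs : Convex ℝ s)
    (hF : ∀ᵐ y ∂μ, ConvexOn ℝ s (F · y)) (hFi : ∀ x ∈ s, Integrable (F x) μ) :
    ConvexOn ℝ s fun x => ∫ y, F x y ∂μ := by
  refine ⟨hs, fun x hx z hz a b ha hb hab => ?_⟩
  have hcomb : Integrable (fun y => a * F x y + b * F z y) μ :=
    ((hFi x hx).const_mul a).add ((hFi z hz).const_mul b)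
  calc ∫ y, F (a • x + b • z) y ∂μ ≤ ∫ y, (a * F x y + b * F z y) ∂μ :=
        integral_mono_ae (hFi _ (hs hx hz ha hb hab)) hcomb
          (hF.mono fun y hy => hy.2 hx hz ha hb hab)
    _ = a • ∫ y, F x y ∂μ + b • ∫ y, F z y ∂μ := by
        rw [integral_add ((hFi x hx).const_mul a) ((hFi z hz).const_mul b),
          integral_const_mul, integral_const_mul, smul_eq_mul, smul_eq_mul]

variable {E : Type*} [NormedAddCommGroup E] [MeasurableSpace E] [BorelSpace E]
  {μ : Measure E} {u k : E → ℝ}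

section FiniteOnCompacts

variable [IsFiniteMeasureOnCompacts μ]

theorem integrable_comp_sub_mul (hu : Continuous u) (hk : Continuous k)
    (hks : HasCompactSupport k) (x : E) : Integrable (fun y => u (x - y) * k y) μ :=
  ((hu.comp (continuous_const.sub continuous_id)).mul hk).integrable_of_hasCompactSupport
    hks.mul_left

theorem ConvexOn.integral_comp_sub_mul [NormedSpace ℝ E] (hconv : ConvexOn ℝ univ u)
    (hu : Continuous u) (hk : Continuous k) (hk0 : ∀ y, 0 ≤ k y) (hks : HasCompactSupport k) :
    ConvexOn ℝ univ fun x => ∫ y, u (x - y) * k y ∂μ :=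
  convexOn_integral convex_univ
    (.of_forall fun y => ((hconv.comp_sub_const y).smul (hk0 y)).congr fun _ _ => mul_comm _ _)
    fun x _ => integrable_comp_sub_mul hu hk hks x

theorem ConvexOn.norm_sq_sub_integral_comp_sub_mul [InnerProductSpace ℝ E]
    (hconv : ConvexOn ℝ univ fun x => ‖x‖ ^ 2 - u x) (hu : Continuous u) (hk : Continuous k)
    (hk0 : ∀ y, 0 ≤ k y) (hks : HasCompactSupport k) (hk1 : ∫ y, k y ∂μ = 1) :
    ConvexOn ℝ univ fun x => ‖x‖ ^ 2 - ∫ y, u (x - y) * k y ∂μ := by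
  have hki : Integrable k μ := hk.integrable_of_hasCompactSupport hks
  have hint : ∀ x, Integrable (fun y => (‖x‖ ^ 2 - u (x - y)) * k y) μ := fun x =>
    integrable_comp_sub_mul (u := fun z => ‖x‖ ^ 2 - u z) (continuous_const.sub hu) hk hks x
  have hconvF : ConvexOn ℝ univ fun x => ∫ y, (‖x‖ ^ 2 - u (x - y)) * k y ∂μ :=
    convexOn_integral convex_univ (.of_forall fun y =>
      ((hconv.norm_sq_sub_comp_sub_const y).smul (hk0 y)).congr fun _ _ => mul_comm _ _)
      fun x _ => hint x
  refine hconvF.congr fun x _ => ?_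
  simp only [sub_mul]
  rw [integral_sub (hki.const_mul _) (integrable_comp_sub_mul hu hk hks x), integral_const_mul,
    hk1, mul_one]

end FiniteOnCompacts

theorem contDiff_integral_comp_sub_mul [NormedSpace ℝ E] [FiniteDimensional ℝ E]
    [μ.IsAddHaarMeasure] {n : ℕ∞} (hu : Continuous u) (hk : ContDiff ℝ n k)
    (hks : HasCompactSupport k) :
    ContDiff ℝ n fun x => ∫ y, u (x - y) * k y ∂μ := by
  have hconv : (fun x => ∫ y, u (x - y) * k y ∂μ) = convolution k u (.mul ℝ ℝ) μ := by
    funext x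
    simp only [convolution_def, ContinuousLinearMap.mul_apply', mul_comm]
  rw [hconv]
  exact hks.contDiff_convolution_left _ hk hu.locallyIntegrable

theorem integral_inv_pow_finrank_mul_comp_inv_smul [NormedSpace ℝ E] [FiniteDimensional ℝ E]
    (μ : Measure E) [μ.IsAddHaarMeasure] (η : E → ℝ) {δ : ℝ} (hδ : 0 < δ) :
    ∫ y, (δ ^ Module.finrank ℝ E)⁻¹ * η (δ⁻¹ • y) ∂μ = ∫ y, η y ∂μ := by
  rw [integral_const_mul, Measure.integral_comp_inv_smul_of_nonneg μ η hδ.le, smul_eq_mul,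
    inv_mul_cancel_left₀ (pow_ne_zero _ hδ.ne')]

end Mollification

section SecondDerivative

variable {E : Type*} [NormedAddCommGroup E] {f : E → ℝ}

theorem ConvexOn.fderiv_fderiv_apply_self_nonneg [NormedSpace ℝ E] (hconv : ConvexOn ℝ univ f)
    (hf : ContDiff ℝ 2 f) (x v : E) : 0 ≤ fderiv ℝ (fderiv ℝ f) x v v := by
  have hline : ∀ t : ℝ, HasDerivAt (fun s : ℝ => s • v + x) v t := fun t => by
    simpa using ((hasDerivAt_id t).smul_const v).add_const x
  have hslope : ∀ t : ℝ,
      HasDerivAt (fun s : ℝ => f (s • v + x)) (fderiv ℝ f (t • v + x) v) t := fun t =>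
    ((hf.differentiable two_ne_zero _).hasFDerivAt).comp_hasDerivAt t (hline t)
  have hcurv : HasDerivAt (fun t : ℝ => fderiv ℝ f (t • v + x) v)
      (fderiv ℝ (fderiv ℝ f) x v v) 0 := by
    have hdf : Differentiable ℝ (fderiv ℝ f) :=
      (hf.fderiv_right (m := 1) le_rfl).differentiable one_ne_zero
    simpa [Function.comp_def] using ((ContinuousLinearMap.apply ℝ ℝ v).hasFDerivAt.comp _
      (hdf _).hasFDerivAt).comp_hasDerivAt 0 (hline 0)
  have hmono : Monotone fun t : ℝ => fderiv ℝ f (t • v + x) v := by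
    have hline_conv : ConvexOn ℝ univ fun t : ℝ => f (t • v + x) := by
      simpa only [preimage_univ, Function.comp_def, AffineMap.lineMap_apply_module',
        add_sub_cancel_right] using hconv.comp_affineMap (AffineMap.lineMap (k := ℝ) x (v + x))
    simpa [monotoneOn_univ, funext fun t => (hslope t).deriv] using
      hline_conv.monotoneOn_deriv fun t _ => (hslope t).differentiableAt
  simpa [hcurv.deriv] using hmono.deriv_nonneg (x := 0)

theorem fderiv_fderiv_apply_self_le_of_convexOn_norm_sq_sub [InnerProductSpace ℝ E]
    (hconv : ConvexOn ℝ univ fun x => ‖x‖ ^ 2 - f x) (hf : ContDiff ℝ 2 f) (x v : E) :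
    fderiv ℝ (fderiv ℝ f) x v v ≤ 2 * ‖v‖ ^ 2 := by
  have hg := hconv.fderiv_fderiv_apply_self_nonneg ((contDiff_norm_sq ℝ).sub hf) x v
  have hdf : Differentiable ℝ (fderiv ℝ f) :=
    (hf.fderiv_right (m := 1) le_rfl).differentiable one_ne_zero
  have hDg : fderiv ℝ (fun y => ‖y‖ ^ 2 - f y)
      = fun y => (2 • innerSL ℝ : E →L[ℝ] E →L[ℝ] ℝ) y - fderiv ℝ f y := by
    funext y
    rw [fderiv_fun_sub ((contDiff_norm_sq ℝ).differentiable two_ne_zero y)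
      (hf.differentiable two_ne_zero y), fderiv_norm_sq_apply]
    rfl
  have hD2g : fderiv ℝ (fderiv ℝ fun y => ‖y‖ ^ 2 - f y) x
      = 2 • innerSL ℝ - fderiv ℝ (fderiv ℝ f) x := by
    rw [hDg, fderiv_fun_sub (ContinuousLinearMap.differentiableAt _) (hdf x),
      ContinuousLinearMap.fderiv]
  rw [hD2g] at hg
  simp only [sub_apply, smul_apply, nsmul_eq_mul, Nat.cast_ofNat, sub_nonneg] at hg
  rwa [innerSL_apply_apply, real_inner_self_eq_norm_sq] at hg

end SecondDerivative

theorem mollified_infDist_sq_second_deriv_bounds_general {n : ℕ} (C : Set (EuclideanSpace ℝ (Fin n)))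
    (hconv : Convex ℝ C)
    (η : EuclideanSpace ℝ (Fin n) → ℝ) (hsm : ContDiff ℝ (⊤ : ℕ∞) η)
    (hpos : ∀ x, 0 ≤ η x) (hsupp : Function.support η ⊆ Metric.closedBall 0 1)
    (hint : ∫ x, η x = 1) (δ : ℝ) (hδ : 0 < δ)
    (φ : EuclideanSpace ℝ (Fin n) → ℝ)
    (hφ : ∀ x, φ x = ∫ y, Metric.infDist (x - y) C ^ 2 * ((δ ^ n)⁻¹ * η (δ⁻¹ • y))) :
    ∀ x v : EuclideanSpace ℝ (Fin n),
      0 ≤ fderiv ℝ (fderiv ℝ φ) x v v ∧ fderiv ℝ (fderiv ℝ φ) x v v ≤ 2 * ‖v‖ ^ 2 := by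
  set k : EuclideanSpace ℝ (Fin n) → ℝ := fun y => (δ ^ n)⁻¹ * η (δ⁻¹ • y)
  have hk : ContDiff ℝ (⊤ : ℕ∞) k := contDiff_const.mul (hsm.comp (contDiff_const_smul _))
  have hk0 : ∀ y, 0 ≤ k y := fun y => mul_nonneg (by positivity) (hpos _)
  have hks : HasCompactSupport k :=
    ((HasCompactSupport.intro (isCompact_closedBall 0 1) fun y hy =>
      Function.notMem_support.1 fun h => hy (hsupp h)).comp_smul (inv_ne_zero hδ.ne')).mul_left
  have hk1 : ∫ y, k y = 1 := by
    simpa [k, finrank_euclideanSpace_fin, hint] using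
      integral_inv_pow_finrank_mul_comp_inv_smul volume η hδ
  have hd : Continuous fun z => infDist z C ^ 2 := (continuous_infDist_pt C).pow 2
  have hφ' : φ = fun x => ∫ y, infDist (x - y) C ^ 2 * k y := funext hφ
  have hφ2 : ContDiff ℝ 2 φ :=
    hφ' ▸ (contDiff_integral_comp_sub_mul hd hk hks).of_le (by norm_cast)
  have hφconv : ConvexOn ℝ univ φ :=
    hφ' ▸ (convexOn_infDist_sq hconv).integral_comp_sub_mul hd hk.continuous hk0 hks
  have hφconv' : ConvexOn ℝ univ fun x => ‖x‖ ^ 2 - φ x :=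
    hφ' ▸ (convexOn_norm_sq_sub_infDist_sq_s10 C).norm_sq_sub_integral_comp_sub_mul hd
      hk.continuous hk0 hks hk1
  exact fun x v => ⟨hφconv.fderiv_fderiv_apply_self_nonneg hφ2 x v,
    fderiv_fderiv_apply_self_le_of_convexOn_norm_sq_sub hφconv' hφ2 x v⟩

/-- The second Fréchet derivative of the mollified squared distance `φ_δ = d_C² ⋆ η_δ`
satisfies `0 ≤ D²φ_δ(x)[v, v] ≤ 2‖v‖²` for every `x, v ∈ ℝ^n`. -/
theorem mollified_infDist_sq_second_deriv_bounds {n : ℕ} (C : Set (EuclideanSpace ℝ (Fin n)))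
    (hne : C.Nonempty) (hclosed : IsClosed C) (hconv : Convex ℝ C)
    (η : EuclideanSpace ℝ (Fin n) → ℝ) (hsm : ContDiff ℝ (⊤ : ℕ∞) η)
    (hpos : ∀ x, 0 ≤ η x) (hsupp : Function.support η ⊆ Metric.closedBall 0 1)
    (hint : ∫ x, η x = 1) (δ : ℝ) (hδ : 0 < δ)
    (φ : EuclideanSpace ℝ (Fin n) → ℝ)
    (hφ : ∀ x, φ x = ∫ y, Metric.infDist (x - y) C ^ 2 * ((δ ^ n)⁻¹ * η (δ⁻¹ • y))) :
    ∀ x v : EuclideanSpace ℝ (Fin n),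
      0 ≤ fderiv ℝ (fderiv ℝ φ) x v v ∧ fderiv ℝ (fderiv ℝ φ) x v v ≤ 2 * ‖v‖ ^ 2 :=
  mollified_infDist_sq_second_deriv_bounds_general C hconv η hsm hpos hsupp hint δ hδ φ hφ
end
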